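/- Let K be a positive integer, Δx := 2π/K, and T > 0. Let ḡ : ℝ^K → ℝ^K be continuous and f̄ : ℝ^K → ℝ^K be continuously differentiable (components indexed by ℤ/Kℤ). Let u : [0,T) → ℝ^K be differentiable with derivative u̇, satisfying the average-difference scheme: for all t ∈ [0,T) and all k ∈ ℤ/Kℤ, (u̇_{k+1}(t) + ḡ_{k+1}(u(t)) − u̇_k(t) − ḡ_k(u(t)))/Δx = (f̄_{k+1}(u(t)) + f̄_k(u(t)))/2. Suppose moreover that ∑_{j=1}^{K} ∑_{k=1}^{K} (∂f̄_j/∂v_k)(u(t)) ≠ 0 for all t ∈ [0,T). Then for all t ∈ [0,T) and all k, u̇_k(t) + ḡ_k(u(t)) = (δ_FD^{-1} f̄(u(t)))_k + 𝒞_d(u(t)). -/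

import Mathlib

open Real Finset

/-- The trapezoidal partial sum `Δx(v₀/2 + ∑_{i=1}^{n−1} vᵢ + vₙ/2)` (with `Δx = 2π/K`
and periodic indexing, so that `v₀ = v_K`). -/
noncomputable def partialTrap (K : ℕ) (v : ZMod K → ℝ) (n : ℕ) : ℝ :=
  (2 * π / K) * (v 0 / 2 + (∑ i ∈ Finset.Ico 1 n, v (i : ZMod K)) + v (n : ZMod K) / 2)

/-- The trapezoidal antiderivative `δ_FD⁻¹`: for `k = 1,…,K` (periodic indexing),
`(δ_FD⁻¹v)_k = Δx(v₀/2 + ∑_{i=1}^{k−1} vᵢ + v_k/2) −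
(Δx²/(2π)) ∑_{i=1}^{K} (v₀/2 + ∑_{j=1}^{i−1} vⱼ + vᵢ/2)`. -/
noncomputable def deltaFDinv (K : ℕ) (v : ZMod K → ℝ) (k : ZMod K) : ℝ :=
  partialTrap K v (if k.val = 0 then K else k.val) -
    (1 / (2 * π)) * (2 * π / K) * ∑ i ∈ Finset.Icc 1 K, partialTrap K v i

/-- The discrete constant `𝒞_d(v)`, determined from the discrete implicit constraint:
`𝒞_d(v) = [∑_{j,k} (∂f̄ⱼ/∂v_k)(v)(ḡ_k(v) − (δ_FD⁻¹f̄(v))_k)] / [∑_{j,k} (∂f̄ⱼ/∂v_k)(v)]`. -/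
noncomputable def Cd (K : ℕ) [NeZero K]
    (fbar gbar : (ZMod K → ℝ) → ZMod K → ℝ) (v : ZMod K → ℝ) : ℝ :=
  (∑ j : ZMod K, ∑ k : ZMod K,
      fderiv ℝ (fun z => fbar z j) v (Pi.single k 1) * (gbar v k - deltaFDinv K (fbar v) k)) /
    (∑ j : ZMod K, ∑ k : ZMod K, fderiv ℝ (fun z => fbar z j) v (Pi.single k 1))

/-!
Summing the scheme over `ℤ/Kℤ` telescopes, so `∑ⱼ f̄ⱼ(u)` vanishes on `[0,T)`; differentiating
in time gives `∑ⱼ Df̄ⱼ(u) u̇ = 0`. Summing the scheme from `0` to `k` shows that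
`u̇ + ḡ(u) − δ_FD⁻¹ f̄(u)` is a constant `C` independent of `k`. Substituting
`ḡ(u) − δ_FD⁻¹ f̄(u) = C − u̇` in the numerator of `𝒞_d(u)` turns it into `C` times the
denominator minus `∑ⱼ Df̄ⱼ(u) u̇ = 0`, so `𝒞_d(u) = C`.
-/

lemma sum_sub_comp_add_right_eq_zero {G M : Type*} [AddGroup G] [Fintype G] [AddCommGroup M]
    (w : G → M) (a : G) : ∑ k, (w (k + a) - w k) = 0 := by
  rw [sum_sub_distrib, Fintype.sum_equiv (Equiv.addRight a) (fun k => w (k + a)) w fun _ => rfl,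
    sub_self]

lemma sum_eq_zero_of_trapezoid_step {G : Type*} [AddGroup G] [Fintype G] {w v : G → ℝ} {a : G}
    {h : ℝ} (hh : h ≠ 0) (hstep : ∀ k, w (k + a) - w k = h * ((v (k + a) + v k) / 2)) :
    ∑ k, v k = 0 := by
  have htel : h * ∑ k, v k = 0 := by
    calc h * ∑ k, v k = h * ((∑ k, v (k + a) + ∑ k, v k) / 2) := by
          rw [Fintype.sum_equiv (Equiv.addRight a) (fun k => v (k + a)) v fun _ => rfl]; ring
      _ = ∑ k, (w (k + a) - w k) := by
          rw [← sum_add_distrib, sum_div, mul_sum]; exact (sum_congr rfl fun k _ => hstep k).symm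
      _ = 0 := sum_sub_comp_add_right_eq_zero w a
  exact (mul_eq_zero.mp htel).resolve_left hh

-- At `n = 0` the trapezoidal sum counts `v 0` twice, so the recursion only starts at `1`.
lemma partialTrap_add_one (K : ℕ) (v : ZMod K → ℝ) {n : ℕ} (hn : 1 ≤ n) :
    partialTrap K v (n + 1) = partialTrap K v n + 2 * π / K * ((v (n + 1) + v n) / 2) := by
  simp only [partialTrap]
  rw [sum_Ico_succ_top hn]
  push_cast
  ring

lemma eq_add_partialTrap_of_trapezoid_step {K : ℕ} {w v : ZMod K → ℝ}
    (hstep : ∀ k, w (k + 1) - w k = 2 * π / K * ((v (k + 1) + v k) / 2)) {n : ℕ} (hn : 1 ≤ n) :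
    w n = w 0 + partialTrap K v n := by
  induction n, hn using Nat.le_induction with
  | base =>
    have h := hstep 0
    simp only [partialTrap, Ico_self, sum_empty, zero_add, Nat.cast_one] at h ⊢
    linarith
  | succ n hn ih =>
    have h := hstep n
    rw [partialTrap_add_one K v hn]
    push_cast
    linarith

lemma one_le_and_natCast_ite_val {K : ℕ} [NeZero K] (m : ZMod K) :
    1 ≤ (if m.val = 0 then K else m.val) ∧ ((if m.val = 0 then K else m.val : ℕ) : ZMod K) = m := by
  split_ifs with h
  · exact ⟨Nat.one_le_iff_ne_zero.mpr (NeZero.ne K), by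
      rw [ZMod.natCast_self, eq_comm, ← ZMod.val_eq_zero, h]⟩
  · exact ⟨Nat.one_le_iff_ne_zero.mpr h, ZMod.natCast_zmod_val m⟩

lemma exists_sub_deltaFDinv_eq_const {K : ℕ} [NeZero K] {w v : ZMod K → ℝ}
    (hstep : ∀ k, w (k + 1) - w k = 2 * π / K * ((v (k + 1) + v k) / 2)) :
    ∃ C, ∀ m, w m - deltaFDinv K v m = C := by
  refine ⟨w 0 + (1 / (2 * π)) * (2 * π / K) * ∑ i ∈ Icc 1 K, partialTrap K v i, fun m => ?_⟩
  obtain ⟨hn1, hcast⟩ := one_le_and_natCast_ite_val m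
  have hm : w m = w 0 + partialTrap K v (if m.val = 0 then K else m.val) := by
    conv_lhs => rw [← hcast]
    exact eq_add_partialTrap_of_trapezoid_step hstep hn1
  rw [deltaFDinv, hm]
  ring

lemma ContinuousLinearMap.apply_eq_sum_mul_single {ι : Type*} [Fintype ι] [DecidableEq ι]
    (L : (ι → ℝ) →L[ℝ] ℝ) (x : ι → ℝ) : L x = ∑ k, x k * L (Pi.single k 1) := by
  conv_lhs => rw [pi_eq_sum_univ' x]
  simp only [map_sum, map_smul, smul_eq_mul]

lemma sum_fderiv_apply_eq_zero_of_sum_comp_eqOn_zero {E ι : Type*} [NormedAddCommGroup E]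
    [NormedSpace ℝ E] [Fintype ι] {F : E → ι → ℝ} {u : ℝ → E} {u' : E} {s : Set ℝ} {t : ℝ}
    (hF : ∀ j, DifferentiableAt ℝ (fun z => F z j) (u t)) (hu : HasDerivWithinAt u u' s t)
    (hs : UniqueDiffWithinAt ℝ s t) (ht : t ∈ s) (hzero : ∀ x ∈ s, ∑ j, F (u x) j = 0) :
    ∑ j, fderiv ℝ (fun z => F z j) (u t) u' = 0 := by
  have hderiv : HasDerivWithinAt (fun x => ∑ j, F (u x) j)
      (∑ j, fderiv ℝ (fun z => F z j) (u t) u') s t :=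
    HasDerivWithinAt.fun_sum fun j _ => (hF j).hasFDerivAt.comp_hasDerivWithinAt t hu
  exact hs.eq_deriv s hderiv ((hasDerivWithinAt_const t s 0).congr hzero (hzero t ht))

lemma Cd_eq_of_sub_deltaFDinv_eq {K : ℕ} [NeZero K] {fbar gbar : (ZMod K → ℝ) → ZMod K → ℝ}
    {v x : ZMod K → ℝ} {C : ℝ} (hconst : ∀ k, gbar v k - deltaFDinv K (fbar v) k = C - x k)
    (hx : ∑ j, fderiv ℝ (fun z => fbar z j) v x = 0)
    (hden : ∑ j, ∑ k, fderiv ℝ (fun z => fbar z j) v (Pi.single k 1) ≠ 0) :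
    Cd K fbar gbar v = C := by
  rw [Cd, div_eq_iff hden]
  simp_rw [ContinuousLinearMap.apply_eq_sum_mul_single _ x] at hx
  simp_rw [hconst, mul_sub, sum_sub_distrib, mul_sum, mul_comm _ (x _), hx, sub_zero,
    mul_comm _ C]

theorem averageDifference_to_integral_form_general (K : ℕ) [NeZero K] (T : ℝ)
    (gbar fbar : (ZMod K → ℝ) → ZMod K → ℝ)
    (hf : ContDiff ℝ 1 fbar)
    (u udot : ℝ → ZMod K → ℝ)
    (hderiv : ∀ t ∈ Set.Ico (0:ℝ) T, ∀ k : ZMod K,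
      HasDerivWithinAt (fun s => u s k) (udot t k) (Set.Ico (0:ℝ) T) t)
    (hscheme : ∀ t ∈ Set.Ico (0:ℝ) T, ∀ k : ZMod K,
      (udot t (k + 1) + gbar (u t) (k + 1) - udot t k - gbar (u t) k) / (2 * π / K) =
        (fbar (u t) (k + 1) + fbar (u t) k) / 2)
    (hnd : ∀ t ∈ Set.Ico (0:ℝ) T,
      (∑ j : ZMod K, ∑ k : ZMod K,
        fderiv ℝ (fun z => fbar z j) (u t) (Pi.single k 1)) ≠ 0) :
    ∀ t ∈ Set.Ico (0:ℝ) T, ∀ k : ZMod K,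
      udot t k + gbar (u t) k = deltaFDinv K (fbar (u t)) k + Cd K fbar gbar (u t) := by
  have hΔ : 2 * π / K ≠ 0 := by have := NeZero.ne K; positivity
  have hstep : ∀ s ∈ Set.Ico (0:ℝ) T, ∀ m : ZMod K,
      udot s (m + 1) + gbar (u s) (m + 1) - (udot s m + gbar (u s) m) =
        2 * π / K * ((fbar (u s) (m + 1) + fbar (u s) m) / 2) := by
    intro s hs m
    have h := hscheme s hs m
    rw [div_eq_iff hΔ] at h
    linarith
  intro t ht k
  obtain ⟨C, hC⟩ :=
    exists_sub_deltaFDinv_eq_const (w := fun m => udot t m + gbar (u t) m) (hstep t ht)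
  have hfu : ∑ j, fderiv ℝ (fun z => fbar z j) (u t) (udot t) = 0 :=
    sum_fderiv_apply_eq_zero_of_sum_comp_eqOn_zero
      (fun j => differentiableAt_pi.mp (hf.differentiable one_ne_zero (u t)) j)
      (hasDerivWithinAt_pi.mpr (hderiv t ht)) (uniqueDiffOn_Ico 0 T t ht) ht
      fun s hs =>
        sum_eq_zero_of_trapezoid_step (w := fun m => udot s m + gbar (u s) m) hΔ (hstep s hs)
  have hCd : Cd K fbar gbar (u t) = C :=
    Cd_eq_of_sub_deltaFDinv_eq (fun m => by linarith [hC m]) hfu (hnd t ht)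
  linarith [hC k]

/-- A solution of the average-difference scheme
`δ⁺ₓ(u̇_k + ḡ_k(u)) = μ⁺ₓ f̄_k(u)` on `[0,T)` satisfying the nondegeneracy condition
`∑_{j,k} (∂f̄ⱼ/∂v_k)(u(t)) ≠ 0` also solves the integral-form scheme
`u̇_k + ḡ_k(u) = (δ_FD⁻¹f̄(u))_k + 𝒞_d(u)`. -/
theorem averageDifference_to_integral_form (K : ℕ) [NeZero K] (T : ℝ) (hT : 0 < T)
    (gbar fbar : (ZMod K → ℝ) → ZMod K → ℝ)
    (hg : Continuous gbar) (hf : ContDiff ℝ 1 fbar)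
    (u udot : ℝ → ZMod K → ℝ)
    (hderiv : ∀ t ∈ Set.Ico (0:ℝ) T, ∀ k : ZMod K,
      HasDerivWithinAt (fun s => u s k) (udot t k) (Set.Ico (0:ℝ) T) t)
    (hscheme : ∀ t ∈ Set.Ico (0:ℝ) T, ∀ k : ZMod K,
      (udot t (k + 1) + gbar (u t) (k + 1) - udot t k - gbar (u t) k) / (2 * π / K) =
        (fbar (u t) (k + 1) + fbar (u t) k) / 2)
    (hnd : ∀ t ∈ Set.Ico (0:ℝ) T,
      (∑ j : ZMod K, ∑ k : ZMod K,
        fderiv ℝ (fun z => fbar z j) (u t) (Pi.single k 1)) ≠ 0) :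
    ∀ t ∈ Set.Ico (0:ℝ) T, ∀ k : ZMod K,
      udot t k + gbar (u t) k = deltaFDinv K (fbar (u t)) k + Cd K fbar gbar (u t) :=
  averageDifference_to_integral_form_general K T gbar fbar hf u udot hderiv hscheme hnd
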